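/- Let N, N', T, m be real numbers with N > 0, N' > 0, 0 < m < T, and log T + 1 > 0 (natural logarithm). If N − N' < N·(log T − log(T − m))/(log T + 1), then −(1/N)·(log T + 1) + (1/N')·(log(T − m) + 1) < 0. -/
import Mathlib

/-- The paper's Theorem: if the collaboration accounts for a sufficiently small
fraction of the total observed data, i.e.
`N - N' < N * (log T - log (T - m)) / (log T + 1)`, then the partial derivative
of the aver score with respect to the global term count `T`,
`-(1/N) * (log T + 1) + (1/N') * (log (T - m) + 1)`, is negative. -/
theorem aver_deriv_neg_of_small_collab (N N' T m : ℝ)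
    (hN : 0 < N) (hN' : 0 < N') (hm : 0 < m) (hmT : m < T)
    (hlog : Real.log T + 1 > 0)
    (h : N - N' < N * (Real.log T - Real.log (T - m)) / (Real.log T + 1)) :
    -(1 / N) * (Real.log T + 1) + (1 / N') * (Real.log (T - m) + 1) < 0 := by
  set a := Real.log T
  set b := Real.log (T - m)
  rw [lt_div_iff₀ hlog] at h
  rw [show -(1 / N) * (a + 1) + (1 / N') * (b + 1)
      = (N * (b + 1) - N' * (a + 1)) / (N * N') by field_simp; ring]
  apply div_neg_of_neg_of_pos _ (mul_pos hN hN')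
  nlinarith [h]
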